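/- Let n ≥ 1 be an integer, ℓ ∈ ℕ, let J ⊆ ℕ be a finite nonempty set, and let σ_j ≥ 0 for j ∈ J with σ_j = 0 for at least one j ∈ J. Define g(η) = min_{j ∈ J} ((j−ℓ)η + 2σ_j) and h(η) = (n+η)/(n+η−g(η)) when g(η) < n + η, h(η) = ∞ otherwise. Assume 1 < sup_{η ∈ [0,∞)} h(η) < ∞. Then h is real-valued on [0,∞), the supremum is attained, and there exists η̄ ∈ (0,∞) such that h(η̄) = sup_{η ≥ 0} h(η), h is nondecreasing on [0, η̄], and h is nonincreasing on [η̄, ∞). -/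

import Mathlib

open scoped Classical ENNReal

/-- The scaling function `g(η) = min_{j ∈ J} ((j−ℓ)η + 2σ_j)`. -/
noncomputable def gFun (ℓ : ℕ) (J : Finset ℕ) (hJ : J.Nonempty) (σ : ℕ → ℝ) (η : ℝ) : ℝ :=
  J.inf' hJ (fun j => ((j : ℝ) - ℓ) * η + 2 * σ j)

/-- The (real-valued) function `h(η) = (n+η)/(n+η−g(η))`. -/
noncomputable def hFun (n ℓ : ℕ) (J : Finset ℕ) (hJ : J.Nonempty) (σ : ℕ → ℝ) (η : ℝ) : ℝ :=
  ((n : ℝ) + η) / ((n : ℝ) + η - gFun ℓ J hJ σ η)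

/-- The extended-real-valued function `h`, equal to `∞` when `g(η) ≥ n + η`. -/
noncomputable def hExt (n ℓ : ℕ) (J : Finset ℕ) (hJ : J.Nonempty) (σ : ℕ → ℝ) (η : ℝ) :
    ℝ≥0∞ :=
  if gFun ℓ J hJ σ η < (n : ℝ) + η then ENNReal.ofReal (hFun n ℓ J hJ σ η) else ⊤

/-!
On `[0,∞)` the function `h` is an increasing function of `φ(η) = g(η)/(n+η)`, namely
`h = 1/(1-φ)`. As a minimum of affine functions `g` is concave, so the superlevel sets
`{η | r(n+η) ≤ g(η)}` of `φ` are intervals: `φ`, hence `h`, is quasiconcave, and a quasiconcave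
function increases up to a maximizer and decreases after it. A maximizer exists because
`p_c < ∞` forces some `j ≤ ℓ` (otherwise `g(η) ≥ η` and `h(η) ≥ 1 + η/n`), which bounds `g` by a
constant, so `φ(η) → 0` at infinity; it is positive because `h(0) = 1 < p_c`.
-/

open Set

theorem QuasiconcaveOn.of_le_iff {𝕜 E β γ : Type*} [Semiring 𝕜] [PartialOrder 𝕜]
    [AddCommMonoid E] [SMul 𝕜 E] [LinearOrder β] [LinearOrder γ] {s : Set E} {f : E → β}
    {g : E → γ} (hf : QuasiconcaveOn 𝕜 s f) (hfg : ∀ x ∈ s, ∀ y ∈ s, f x ≤ f y ↔ g x ≤ g y) :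
    QuasiconcaveOn 𝕜 s g := by
  rw [quasiconcaveOn_iff_min_le] at hf ⊢
  refine ⟨hf.1, fun x hx y hy a b ha hb hab => ?_⟩
  have hz : a • x + b • y ∈ s := hf.1 hx hy ha hb hab
  have := hf.2 hx hy ha hb hab
  rw [min_le_iff] at this ⊢
  exact this.imp (hfg x hx _ hz).1 (hfg y hy _ hz).1

section Quasiconcave

variable {𝕜 β : Type*} [Field 𝕜] [LinearOrder 𝕜] [IsStrictOrderedRing 𝕜]

theorem ConcaveOn.quasiconcaveOn_div_const_add {s : Set 𝕜} {f : 𝕜 → 𝕜} {c : 𝕜}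
    (hf : ConcaveOn 𝕜 s f) (hc : ∀ x ∈ s, 0 < c + x) :
    QuasiconcaveOn 𝕜 s (fun x => f x / (c + x)) := by
  intro r
  have hconc : ConcaveOn 𝕜 s (fun x => f x + (-r * x + -(r * c))) :=
    hf.add ((LinearMap.concaveOn (LinearMap.mulLeft 𝕜 (-r)) hf.1).add_const _)
  convert hconc.convex_ge 0 using 1
  ext x
  refine and_congr_right fun hx => ?_
  rw [le_div_iff₀ (hc x hx)]
  constructor <;> intro h <;> linarith

variable [Preorder β] {s : Set 𝕜} {f : 𝕜 → β} {b : 𝕜}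

theorem QuasiconcaveOn.monotoneOn_of_isMaxOn (hf : QuasiconcaveOn 𝕜 s f) (hb : b ∈ s)
    (hmax : IsMaxOn f s b) : MonotoneOn f (s ∩ Iic b) := by
  intro x hx y hy hxy
  have hseg : Icc x b ⊆ {z ∈ s | f x ≤ f z} :=
    (hf (f x)).ordConnected.out ⟨hx.1, le_rfl⟩ ⟨hb, hmax hx.1⟩
  exact (hseg ⟨hxy, hy.2⟩).2

theorem QuasiconcaveOn.antitoneOn_of_isMaxOn (hf : QuasiconcaveOn 𝕜 s f) (hb : b ∈ s)
    (hmax : IsMaxOn f s b) : AntitoneOn f (s ∩ Ici b) := by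
  intro x hx y hy hxy
  have hseg : Icc b y ⊆ {z ∈ s | f y ≤ f z} :=
    (hf (f y)).ordConnected.out ⟨hb, hmax hy.1⟩ ⟨hy.1, le_rfl⟩
  exact (hseg ⟨hx.2, hxy⟩).2

end Quasiconcave

theorem ContinuousOn.exists_isMaxOn_Ici {f : ℝ → ℝ} {a x₀ R : ℝ} (hf : ContinuousOn f (Ici a))
    (hx₀ : a ≤ x₀) (htail : ∀ x, a ≤ x → R < x → f x ≤ f x₀) :
    ∃ b, a ≤ b ∧ IsMaxOn f (Ici a) b := by
  refine hf.exists_isMaxOn' isClosed_Ici hx₀ ?_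
  rw [Filter.Eventually, Filter.mem_inf_principal, Filter.mem_cocompact]
  refine ⟨Icc a R, isCompact_Icc, fun x hx hxa => htail x hxa ?_⟩
  by_contra! hxR
  exact hx ⟨hxa, hxR⟩

section GFun

variable {n ℓ : ℕ} {J : Finset ℕ} {hJ : J.Nonempty} {σ : ℕ → ℝ}

theorem gFun_le {j : ℕ} (hj : j ∈ J) (η : ℝ) : gFun ℓ J hJ σ η ≤ ((j : ℝ) - ℓ) * η + 2 * σ j :=
  Finset.inf'_le _ hj

theorem continuous_gFun : Continuous (gFun ℓ J hJ σ) :=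
  Continuous.finset_inf'_apply hJ fun j _ => by fun_prop

theorem concaveOn_gFun : ConcaveOn ℝ univ (gFun ℓ J hJ σ) := by
  have : gFun ℓ J hJ σ = J.inf' hJ fun j η => ((j : ℝ) - ℓ) * η + 2 * σ j := by
    ext η
    rw [Finset.inf'_apply]
    rfl
  rw [this]
  refine Finset.inf'_induction hJ _ (fun _ h₁ _ h₂ => h₁.inf h₂) fun j _ => ?_
  exact (LinearMap.concaveOn (LinearMap.mulLeft ℝ ((j : ℝ) - ℓ)) convex_univ).add_const _

theorem gFun_zero (hσ0 : ∀ j ∈ J, 0 ≤ σ j) (hσz : ∃ j ∈ J, σ j = 0) : gFun ℓ J hJ σ 0 = 0 := by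
  obtain ⟨j, hj, hσj⟩ := hσz
  refine le_antisymm ?_ (Finset.le_inf' hJ _ fun i hi => ?_)
  · simpa [hσj] using gFun_le (ℓ := ℓ) (σ := σ) hj 0
  · simpa using hσ0 i hi

theorem le_gFun_of_forall_lt (hσ0 : ∀ j ∈ J, 0 ≤ σ j) (hJℓ : ∀ j ∈ J, ℓ < j) {η : ℝ}
    (hη : 0 ≤ η) : η ≤ gFun ℓ J hJ σ η := by
  refine Finset.le_inf' hJ _ fun j hj => ?_
  have hslope : (ℓ : ℝ) + 1 ≤ j := by exact_mod_cast hJℓ j hj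
  nlinarith [hσ0 j hj]

theorem gFun_le_of_le {j : ℕ} (hj : j ∈ J) (hjℓ : j ≤ ℓ) {η : ℝ} (hη : 0 ≤ η) :
    gFun ℓ J hJ σ η ≤ 2 * σ j := by
  have : ((j : ℝ) - ℓ) * η ≤ 0 :=
    mul_nonpos_of_nonpos_of_nonneg (sub_nonpos.2 (Nat.cast_le.2 hjℓ)) hη
  linarith [gFun_le (hJ := hJ) (ℓ := ℓ) (σ := σ) hj η]

end GFun

section HFun

variable {n ℓ : ℕ} {J : Finset ℕ} {hJ : J.Nonempty} {σ : ℕ → ℝ}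

theorem hFun_zero (hn : n ≠ 0) (hg0 : gFun ℓ J hJ σ 0 = 0) : hFun n ℓ J hJ σ 0 = 1 := by
  simp [hFun, hg0, hn]

theorem gFun_pos_of_one_lt_hFun {η : ℝ} (hdom : gFun ℓ J hJ σ η < n + η)
    (h1 : 1 < hFun n ℓ J hJ σ η) : 0 < gFun ℓ J hJ σ η := by
  have := (one_lt_div (sub_pos.2 hdom)).1 h1
  linarith

theorem hFun_le_hFun_iff {a b : ℝ} (ha : 0 < (n : ℝ) + a) (hb : 0 < (n : ℝ) + b)
    (hga : gFun ℓ J hJ σ a < n + a) (hgb : gFun ℓ J hJ σ b < n + b) :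
    hFun n ℓ J hJ σ a ≤ hFun n ℓ J hJ σ b ↔
      gFun ℓ J hJ σ a / (n + a) ≤ gFun ℓ J hJ σ b / (n + b) := by
  rw [hFun, hFun, div_le_div_iff₀ (sub_pos.2 hga) (sub_pos.2 hgb), div_le_div_iff₀ ha hb]
  constructor <;> intro h <;> linarith

theorem continuousOn_hFun {s : Set ℝ} (hdom : ∀ η ∈ s, gFun ℓ J hJ σ η < n + η) :
    ContinuousOn (hFun n ℓ J hJ σ) s :=
  (by fun_prop : Continuous fun η : ℝ => (n : ℝ) + η).continuousOn.div
    ((by fun_prop : Continuous fun η : ℝ => (n : ℝ) + η).sub continuous_gFun).continuousOn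
    fun η hη => (sub_pos.2 (hdom η hη)).ne'

variable (hn : 0 < n) (hdom : ∀ η, 0 ≤ η → gFun ℓ J hJ σ η < n + η)
include hn hdom

theorem quasiconcaveOn_hFun : QuasiconcaveOn ℝ (Ici 0) (hFun n ℓ J hJ σ) := by
  have hpos : ∀ η ∈ Ici (0 : ℝ), 0 < (n : ℝ) + η := fun η hη =>
    add_pos_of_pos_of_nonneg (Nat.cast_pos.2 hn) hη
  have hconc : ConcaveOn ℝ (Ici 0) (gFun ℓ J hJ σ) :=
    concaveOn_gFun.subset (subset_univ _) (convex_Ici 0)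
  refine (hconc.quasiconcaveOn_div_const_add hpos).of_le_iff fun a ha b hb => ?_
  exact (hFun_le_hFun_iff (hpos a ha) (hpos b hb) (hdom a ha) (hdom b hb)).symm

theorem exists_mem_le_of_bddAbove_hFun (hσ0 : ∀ j ∈ J, 0 ≤ σ j)
    (hbdd : BddAbove (hFun n ℓ J hJ σ '' Ici 0)) : ∃ j ∈ J, j ≤ ℓ := by
  by_contra! hJℓ
  obtain ⟨M, hM⟩ := hbdd
  have hn' : (0 : ℝ) < n := by exact_mod_cast hn
  set η : ℝ := n * max M 1
  have hη : 0 ≤ η := by positivity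
  have hgrowth : ((n : ℝ) + η) / n ≤ hFun n ℓ J hJ σ η :=
    div_le_div_of_nonneg_left (by positivity) (sub_pos.2 (hdom η hη))
      (by linarith [le_gFun_of_forall_lt (hJ := hJ) hσ0 hJℓ hη])
  have hlarge : M < ((n : ℝ) + η) / n := by
    rw [lt_div_iff₀ hn']
    nlinarith [le_max_left M 1, le_max_right M 1]
  exact absurd (hM ⟨η, hη, rfl⟩) (not_le.2 (hlarge.trans_le hgrowth))

theorem exists_isMaxOn_hFun {j₀ : ℕ} (hj₀ : j₀ ∈ J) (hj₀ℓ : j₀ ≤ ℓ) {η₀ : ℝ} (hη₀ : 0 ≤ η₀)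
    (hgη₀ : 0 < gFun ℓ J hJ σ η₀) : ∃ b, 0 ≤ b ∧ IsMaxOn (hFun n ℓ J hJ σ) (Ici 0) b := by
  have hpos : ∀ η, 0 ≤ η → 0 < (n : ℝ) + η := fun η hη =>
    add_pos_of_pos_of_nonneg (Nat.cast_pos.2 hn) hη
  set C := 2 * σ j₀
  refine (continuousOn_hFun hdom).exists_isMaxOn_Ici hη₀
    (R := C * (n + η₀) / gFun ℓ J hJ σ η₀) fun x hx hxR => ?_
  rw [hFun_le_hFun_iff (hpos x hx) (hpos η₀ hη₀) (hdom x hx) (hdom η₀ hη₀),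
    div_le_div_iff₀ (hpos x hx) (hpos η₀ hη₀)]
  have hgx : gFun ℓ J hJ σ x * (n + η₀) ≤ C * (n + η₀) :=
    mul_le_mul_of_nonneg_right (gFun_le_of_le hj₀ hj₀ℓ hx) (hpos η₀ hη₀).le
  have hCx : C * (n + η₀) < gFun ℓ J hJ σ η₀ * x := by rwa [div_lt_iff₀' hgη₀] at hxR
  nlinarith [(Nat.cast_nonneg n : (0 : ℝ) ≤ n)]

end HFun

section HExt

variable {n ℓ : ℕ} {J : Finset ℕ} {hJ : J.Nonempty} {σ : ℕ → ℝ}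

theorem hExt_eq_ofReal {η : ℝ} (h : gFun ℓ J hJ σ η < n + η) :
    hExt n ℓ J hJ σ η = ENNReal.ofReal (hFun n ℓ J hJ σ η) :=
  if_pos h

theorem gFun_lt_of_iSup_hExt_lt_top (hlt : (⨆ η ∈ Ici (0 : ℝ), hExt n ℓ J hJ σ η) < ⊤) {η : ℝ}
    (hη : 0 ≤ η) : gFun ℓ J hJ σ η < n + η := by
  by_contra hcon
  have htop : hExt n ℓ J hJ σ η = ⊤ := if_neg hcon
  exact ((le_biSup (hExt n ℓ J hJ σ) (mem_Ici.2 hη)).trans_lt hlt).ne htop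

theorem bddAbove_hFun_of_iSup_hExt_lt_top
    (hlt : (⨆ η ∈ Ici (0 : ℝ), hExt n ℓ J hJ σ η) < ⊤) : BddAbove (hFun n ℓ J hJ σ '' Ici 0) := by
  refine ⟨(⨆ η ∈ Ici (0 : ℝ), hExt n ℓ J hJ σ η).toReal, ?_⟩
  rintro _ ⟨η, hη, rfl⟩
  rw [← ENNReal.ofReal_le_iff_le_toReal hlt.ne,
    ← hExt_eq_ofReal (gFun_lt_of_iSup_hExt_lt_top hlt hη)]
  exact le_biSup (hExt n ℓ J hJ σ) hη

theorem iSup_hExt_eq_ofReal (hdom : ∀ η, 0 ≤ η → gFun ℓ J hJ σ η < n + η) {b : ℝ} (hb : 0 ≤ b)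
    (hmax : IsMaxOn (hFun n ℓ J hJ σ) (Ici 0) b) :
    ⨆ η ∈ Ici (0 : ℝ), hExt n ℓ J hJ σ η = ENNReal.ofReal (hFun n ℓ J hJ σ b) := by
  refine le_antisymm (iSup₂_le fun η hη => ?_) ?_
  · rw [hExt_eq_ofReal (hdom η hη)]
    exact ENNReal.ofReal_le_ofReal (hmax hη)
  · rw [← hExt_eq_ofReal (hdom b hb)]
    exact le_biSup (hExt n ℓ J hJ σ) (mem_Ici.2 hb)

end HExt

/-- if `1 < p_c = sup_{η ≥ 0} h(η) < ∞` (with some `σ_j = 0`), then `h`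
is real-valued on `[0,∞)`, the supremum is attained at some `ηb ∈ (0,∞)`, and `h` is
nondecreasing on `[0,ηb]` and nonincreasing on `[ηb,∞)`. -/
theorem stmt18 (n : ℕ) (hn : 1 ≤ n) (ℓ : ℕ) (J : Finset ℕ) (hJ : J.Nonempty)
    (σ : ℕ → ℝ) (hσ0 : ∀ j ∈ J, 0 ≤ σ j) (hσz : ∃ j ∈ J, σ j = 0)
    (hgt : (1 : ℝ≥0∞) < ⨆ η ∈ Set.Ici (0 : ℝ), hExt n ℓ J hJ σ η)
    (hlt : (⨆ η ∈ Set.Ici (0 : ℝ), hExt n ℓ J hJ σ η) < ⊤) :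
    (∀ η : ℝ, 0 ≤ η → gFun ℓ J hJ σ η < (n : ℝ) + η) ∧
    ∃ ηb : ℝ, 0 < ηb ∧
      ENNReal.ofReal (hFun n ℓ J hJ σ ηb) = (⨆ η ∈ Set.Ici (0 : ℝ), hExt n ℓ J hJ σ η) ∧
      (∀ η : ℝ, 0 ≤ η → hFun n ℓ J hJ σ η ≤ hFun n ℓ J hJ σ ηb) ∧
      MonotoneOn (hFun n ℓ J hJ σ) (Set.Icc 0 ηb) ∧
      AntitoneOn (hFun n ℓ J hJ σ) (Set.Ici ηb) := by
  have hdom := fun η (hη : 0 ≤ η) => gFun_lt_of_iSup_hExt_lt_top hlt hη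
  obtain ⟨η₀, hη₀, hη₀gt⟩ : ∃ η₀ : ℝ, 0 ≤ η₀ ∧ 1 < hFun n ℓ J hJ σ η₀ := by
    obtain ⟨η₀, hη₀, h1⟩ := lt_biSup_iff.1 hgt
    rw [hExt_eq_ofReal (hdom η₀ hη₀), ENNReal.one_lt_ofReal] at h1
    exact ⟨η₀, hη₀, h1⟩
  obtain ⟨j₀, hj₀, hj₀ℓ⟩ :=
    exists_mem_le_of_bddAbove_hFun hn hdom hσ0 (bddAbove_hFun_of_iSup_hExt_lt_top hlt)
  obtain ⟨b, hb, hmax⟩ := exists_isMaxOn_hFun hn hdom hj₀ hj₀ℓ hη₀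
    (gFun_pos_of_one_lt_hFun (hdom η₀ hη₀) hη₀gt)
  have hbpos : 0 < b := by
    refine hb.lt_of_ne fun hb0 => ?_
    have : hFun n ℓ J hJ σ η₀ ≤ hFun n ℓ J hJ σ b := hmax (mem_Ici.2 hη₀)
    rw [← hb0, hFun_zero (by omega) (gFun_zero hσ0 hσz)] at this
    linarith
  have hq := quasiconcaveOn_hFun hn hdom
  refine ⟨hdom, b, hbpos, (iSup_hExt_eq_ofReal hdom hb hmax).symm, fun η hη => hmax hη, ?_, ?_⟩
  · simpa only [Ici_inter_Iic] using hq.monotoneOn_of_isMaxOn hb hmax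
  · exact (hq.antitoneOn_of_isMaxOn hb hmax).mono fun x hx => ⟨hb.trans hx, hx⟩
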